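/- arXiv:2108.07475 — 2 statements merged into one kernel-verified Lean document; each statement's English description precedes it below -/
import Mathlib

section
/- Let H(x,y) = (y, y² − a·x) with a ≠ 0, and let ω ∈ ℂ satisfy ω³ = 1. Define the linear map L_ω(x,y) = (ω·x, ω²·y). Then G⁺_H ∘ L_ω = G⁺_H on all of ℂ², and consequently, for every c > 0, L_ω maps Ω_c onto Ω_c, i.e. L_ω restricts to a holomorphic automorphism of Ω_c. -/
open Filter Topology Set

noncomputable section

/-- `f : U → V` and `g : V → U` are mutually inverse holomorphic maps, i.e.
`f` is a biholomorphism from `U` onto `V` with inverse `g`. -/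
def IsBiholoOn (f g : ℂ × ℂ → ℂ × ℂ) (U V : Set (ℂ × ℂ)) : Prop :=
  DifferentiableOn ℂ f U ∧ DifferentiableOn ℂ g V ∧
    Set.MapsTo f U V ∧ Set.MapsTo g V U ∧
    (∀ z ∈ U, g (f z) = z) ∧ (∀ w ∈ V, f (g w) = w)

/- For `ω³ = 1` the diagonal map `L_ω` commutes with `H ∘ H`: for the weights `(1, 2)` of
`(x, y)`, the components of `H² (x, y) = (y² - a x, (y² - a x)² - a y)` are weighted homogeneous
of degrees `1` and `2` mod `3`. As `‖ω‖ = 1`, `L_ω` is an isometry, so the even subsequence of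
the sequence defining `G⁺_H` is the same at `z` and at `L_ω z`. Leaving `G⁺_H` invariant and
having the inverse `L_{ω²}`, `L_ω` permutes every sublevel set. -/

open Function

def henon (a : ℂ) (z : ℂ × ℂ) : ℂ × ℂ := (z.2, z.2 ^ 2 - a * z.1)

def diagScale (ω : ℂ) (z : ℂ × ℂ) : ℂ × ℂ := (ω * z.1, ω ^ 2 * z.2)

theorem diagScale_diagScale (ω ω' : ℂ) (z : ℂ × ℂ) :
    diagScale ω (diagScale ω' z) = diagScale (ω * ω') z := by
  simp only [diagScale]
  ext <;> ring

theorem diagScale_one : diagScale 1 = id := by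
  ext z <;> simp [diagScale]

theorem differentiable_diagScale (ω : ℂ) : Differentiable ℂ (diagScale ω) :=
  (differentiable_fst.const_mul ω).prodMk (differentiable_snd.const_mul (ω ^ 2))

theorem norm_diagScale {ω : ℂ} (hω : ‖ω‖ = 1) (z : ℂ × ℂ) :
    ‖diagScale ω z‖ = ‖z‖ := by
  simp [diagScale, Prod.norm_def, hω]

theorem leftInverse_diagScale_sq {ω : ℂ} (hω : ω ^ 3 = 1) :
    LeftInverse (diagScale (ω ^ 2)) (diagScale ω) := fun z => by
  rw [diagScale_diagScale, ← pow_succ, hω, diagScale_one, id]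

theorem rightInverse_diagScale_sq {ω : ℂ} (hω : ω ^ 3 = 1) :
    RightInverse (diagScale (ω ^ 2)) (diagScale ω) := fun z => by
  rw [diagScale_diagScale, ← pow_succ', hω, diagScale_one, id]

theorem commute_henon_iterate_two_diagScale (a : ℂ) {ω : ℂ} (hω : ω ^ 3 = 1) :
    Function.Commute (henon a)^[2] (diagScale ω) := fun z => by
  simp only [iterate_succ, iterate_zero, comp_apply, id, henon, diagScale]
  ext
  · linear_combination (ω * z.2 ^ 2) * hω
  · linear_combination
      (ω ^ 2 * (ω ^ 3 + 1) * z.2 ^ 4 - 2 * a * ω ^ 2 * z.1 * z.2 ^ 2) * hω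

theorem comp_eq_of_tendsto_of_commute_iterate {E : Type*} [SeminormedAddCommGroup E]
    {F L : E → E} {G : E → ℝ} (φ : ℕ → ℝ → ℝ) {k : ℕ} (hk : 0 < k)
    (hcomm : Function.Commute F^[k] L) (hL : ∀ z, ‖L z‖ = ‖z‖)
    (hG : ∀ z, Tendsto (fun n => φ n ‖F^[n] z‖) atTop (𝓝 (G z))) (z : E) :
    G (L z) = G z := by
  have hmul : Tendsto (fun n => k * n) atTop atTop :=
    tendsto_id.const_mul_atTop' hk
  have hsub : ∀ w, Tendsto (fun n => φ (k * n) ‖F^[k * n] w‖) atTop (𝓝 (G w)) :=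
    fun w => (hG w).comp hmul
  refine tendsto_nhds_unique ((hsub (L z)).congr fun n => ?_) (hsub z)
  rw [iterate_mul, (hcomm.iterate_left n).eq, hL]

theorem image_preimage_eq_of_comp_eq {α β : Type*} {L : α → α} {G : α → β}
    (hL : Surjective L) (hG : ∀ z, G (L z) = G z) (s : Set β) :
    L '' (G ⁻¹' s) = G ⁻¹' s := by
  have hpre : L ⁻¹' (G ⁻¹' s) = G ⁻¹' s := by ext z; simp only [mem_preimage, hG]
  conv_lhs => rw [← hpre]
  exact image_preimage_eq _ hL

theorem isBiholoOn_preimage_of_comp_eq {L M : ℂ × ℂ → ℂ × ℂ} {G : ℂ × ℂ → ℝ}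
    (hL : Differentiable ℂ L) (hM : Differentiable ℂ M)
    (hML : LeftInverse M L) (hLM : RightInverse M L) (hG : ∀ z, G (L z) = G z) (s : Set ℝ) :
    IsBiholoOn L M (G ⁻¹' s) (G ⁻¹' s) := by
  have hGM : ∀ z, G (M z) = G z := fun z => by rw [← hG, hLM z]
  exact ⟨hL.differentiableOn, hM.differentiableOn, fun z hz => by rwa [mem_preimage, hG],
    fun z hz => by rwa [mem_preimage, hGM], fun z _ => hML z, fun z _ => hLM z⟩

theorem stmt_0_general (a : ℂ) (ω : ℂ) (hω : ω ^ 3 = 1)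
    (H : ℂ × ℂ → ℂ × ℂ) (hH : ∀ z : ℂ × ℂ, H z = (z.2, z.2 ^ 2 - a * z.1))
    (G : ℂ × ℂ → ℝ)
    (hGlim : ∀ z : ℂ × ℂ,
      Tendsto (fun n : ℕ => Real.log (max ‖H^[n] z‖ 1) / (2 : ℝ) ^ n) atTop (𝓝 (G z)))
    (L : ℂ × ℂ → ℂ × ℂ) (hL : ∀ z : ℂ × ℂ, L z = (ω * z.1, ω ^ 2 * z.2)) :
    (∀ z : ℂ × ℂ, G (L z) = G z) ∧
    ∀ c : ℝ, 0 < c →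
      L '' {z : ℂ × ℂ | G z < c} = {z : ℂ × ℂ | G z < c} ∧
      ∃ M : ℂ × ℂ → ℂ × ℂ,
        IsBiholoOn L M {z : ℂ × ℂ | G z < c} {z : ℂ × ℂ | G z < c} := by
  obtain rfl : H = henon a := funext hH
  obtain rfl : L = diagScale ω := funext hL
  have hGL : ∀ z, G (diagScale ω z) = G z :=
    comp_eq_of_tendsto_of_commute_iterate (fun n r => Real.log (max r 1) / 2 ^ n) two_pos
      (commute_henon_iterate_two_diagScale a hω)
      (norm_diagScale (Complex.norm_eq_one_of_pow_eq_one hω three_ne_zero)) hGlim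
  refine ⟨hGL, fun c _ => ⟨?_, diagScale (ω ^ 2), ?_⟩⟩
  · exact image_preimage_eq_of_comp_eq (rightInverse_diagScale_sq hω).surjective hGL (Iio c)
  · exact isBiholoOn_preimage_of_comp_eq (differentiable_diagScale ω)
      (differentiable_diagScale _) (leftInverse_diagScale_sq hω) (rightInverse_diagScale_sq hω)
      hGL (Iio c)

/-- For the Hénon map `H(x,y) = (y, y² - a·x)` with `a ≠ 0` and a cube
root of unity `ω`, the linear map `L_ω(x,y) = (ω·x, ω²·y)` satisfies
`G⁺_H ∘ L_ω = G⁺_H` on all of `ℂ²`, and for every `c > 0`, `L_ω` maps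
`Ω_c = {G⁺_H < c}` onto itself and restricts to a holomorphic automorphism of `Ω_c`. -/
theorem stmt_0 (a : ℂ) (ha : a ≠ 0) (ω : ℂ) (hω : ω ^ 3 = 1)
    (H : ℂ × ℂ → ℂ × ℂ) (hH : ∀ z : ℂ × ℂ, H z = (z.2, z.2 ^ 2 - a * z.1))
    (G : ℂ × ℂ → ℝ) (hGcont : Continuous G) (hGnonneg : ∀ z, 0 ≤ G z)
    (hGlim : ∀ z : ℂ × ℂ,
      Tendsto (fun n : ℕ => Real.log (max ‖H^[n] z‖ 1) / (2 : ℝ) ^ n) atTop (𝓝 (G z)))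
    (L : ℂ × ℂ → ℂ × ℂ) (hL : ∀ z : ℂ × ℂ, L z = (ω * z.1, ω ^ 2 * z.2)) :
    (∀ z : ℂ × ℂ, G (L z) = G z) ∧
    ∀ c : ℝ, 0 < c →
      L '' {z : ℂ × ℂ | G z < c} = {z : ℂ × ℂ | G z < c} ∧
      ∃ M : ℂ × ℂ → ℂ × ℂ,
        IsBiholoOn L M {z : ℂ × ℂ | G z < c} {z : ℂ × ℂ | G z < c} :=
  stmt_0_general a ω hω H hH G hGlim L hL
end
end

section
/- For every c > 0, the punctured Short ℂ², Ω'_c = {z ∈ ℂ² : 0 < G⁺_H(z) < c}, is path-connected. -/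
/-!
The Green function satisfies `G ∘ H = d • G`. On `V⁺ = {w : max ‖w.1‖ R ≤ ‖w.2‖}`, for `R`
large, `H` is forward invariant and acts like `y ↦ y ^ d`, so `G` is within `1` of `log ‖w.2‖`
there. A point with `G z > 0` escapes to infinity, and since `H` copies `y` into the first
coordinate, an orbit staying outside `V⁺` would have decreasing norm; so the orbit enters `V⁺`,
and if `G z < c` it eventually lies in `Wₙ = V⁺ ∩ {log ‖w.2‖ ≤ c dⁿ - 2}`. Each `Wₙ` is
path-connected (a bundle of discs `‖x‖ ≤ ‖y‖` over an annulus), and `H⁻ⁿ(Wₙ) ⊆ Ω'_c` because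
`G ∘ Hⁿ = dⁿ G`. So any two points of `Ω'_c` lie in a common path-connected subset `H⁻ⁿ(Wₙ)`.
-/

open Filter Topology Set

noncomputable section

open Polynomial

theorem isPathConnected_of_eventually_mem {ι X : Type*} [TopologicalSpace X] {l : Filter ι}
    [l.NeBot] {S : Set X} {T : ι → Set X} (hT : ∀ᶠ i in l, IsPathConnected (T i))
    (hTS : ∀ i, T i ⊆ S) (hS : ∀ z ∈ S, ∀ᶠ i in l, z ∈ T i) : IsPathConnected S := by
  rw [isPathConnected_iff]
  refine ⟨?_, fun x hx y hy => ?_⟩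
  · obtain ⟨i, hi⟩ := hT.exists
    exact hi.nonempty.mono (hTS i)
  · obtain ⟨i, hi, hxi, hyi⟩ := (hT.and ((hS x hx).and (hS y hy))).exists
    exact (hi.joinedIn x hxi y hyi).mono (hTS i)

theorem tendsto_cocompact_of_tendsto_comp_atTop {ι X : Type*} [TopologicalSpace X]
    {l : Filter ι} {G : X → ℝ} (hG : Continuous G) {u : ι → X} (hu : Tendsto (G ∘ u) l atTop) :
    Tendsto u l (cocompact X) :=
  hasBasis_cocompact.tendsto_right_iff.2 fun K hK => by
    obtain ⟨B, hB⟩ := hK.bddAbove_image hG.continuousOn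
    exact (hu.eventually_gt_atTop B).mono fun i hi hiK => hi.not_ge (hB ⟨u i, hiK, rfl⟩)

theorem apply_iterate_eq_pow_mul_of_tendsto {X : Type*} {f : X → X} {u G : X → ℝ} {d : ℝ}
    (hd : d ≠ 0) (hG : ∀ z, Tendsto (fun n : ℕ => u (f^[n] z) / d ^ n) atTop (𝓝 (G z)))
    (n : ℕ) (z : X) : G (f^[n] z) = d ^ n * G z := by
  refine tendsto_nhds_unique (hG (f^[n] z))
    ((((hG z).comp (tendsto_add_atTop_nat n)).const_mul (d ^ n)).congr fun k => ?_)
  simp only [Function.comp_apply, Function.iterate_add_apply, pow_add]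
  field_simp

theorem abs_sub_le_one_of_tendsto_div_pow {L : ℕ → ℝ} {d g : ℝ} (hd : 2 ≤ d)
    (hL : ∀ n, |L (n + 1) - d * L n| ≤ 1) (hg : Tendsto (fun n => L n / d ^ n) atTop (𝓝 g)) :
    |g - L 0| ≤ 1 := by
  have hdev : ∀ n, |L n - d ^ n * L 0| ≤ d ^ n - 1 := by
    intro n
    induction n with
    | zero => simp
    | succ n ih =>
      calc |L (n + 1) - d ^ (n + 1) * L 0|
          = |(L (n + 1) - d * L n) + d * (L n - d ^ n * L 0)| := by congr 1; ring
        _ ≤ 1 + d * (d ^ n - 1) := by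
          refine (abs_add_le _ _).trans (add_le_add (hL n) ?_)
          rw [abs_mul, abs_of_pos (by linarith)]
          exact mul_le_mul_of_nonneg_left ih (by linarith)
        _ ≤ d ^ (n + 1) - 1 := by rw [pow_succ]; nlinarith
  refine le_of_tendsto (hg.sub_const (L 0)).abs (Eventually.of_forall fun n => ?_)
  have hdn : 0 < d ^ n := by positivity
  have hsplit : L n / d ^ n - L 0 = (L n - d ^ n * L 0) / d ^ n := by field_simp
  rw [hsplit, abs_div, abs_of_pos hdn, div_le_one hdn]
  linarith [hdev n]

theorem abs_log_sub_log_le_one {s t : ℝ} (ht : 0 < t) (h : |s - t| ≤ t / 2) :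
    |Real.log s - Real.log t| ≤ 1 := by
  obtain ⟨hlo, hhi⟩ := abs_le.1 h
  have hs : 0 < s := by linarith
  rw [← Real.log_div hs.ne' ht.ne', abs_le]
  constructor
  · have hlog := Real.one_sub_inv_le_log_of_pos (div_pos hs ht)
    have hts : t / s ≤ 2 := by rw [div_le_iff₀ hs]; linarith
    rw [inv_div] at hlog
    linarith
  · have hlog := Real.log_le_sub_one_of_pos (div_pos hs ht)
    have hst : s / t ≤ 2 := by rw [div_le_iff₀ ht]; linarith
    linarith

theorem norm_eval_sub_pow_natDegree_le {𝕜 : Type*} [NormedField 𝕜] {p : 𝕜[X]} (hp : p.Monic)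
    {y : 𝕜} (hy : 1 ≤ ‖y‖) :
    ‖p.eval y - y ^ p.natDegree‖ ≤
      (∑ i ∈ Finset.range p.natDegree, ‖p.coeff i‖) * ‖y‖ ^ (p.natDegree - 1) := by
  have hsum : p.eval y - y ^ p.natDegree = ∑ i ∈ Finset.range p.natDegree, p.coeff i * y ^ i := by
    have h := congrArg (eval y) hp.as_sum
    simp only [eval_add, eval_pow, eval_X, eval_finsetSum, eval_mul, eval_C] at h
    rw [h, add_sub_cancel_left]
  rw [hsum, Finset.sum_mul]
  refine (norm_sum_le _ _).trans (Finset.sum_le_sum fun i hi => ?_)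
  rw [norm_mul, norm_pow]
  have hi' := Finset.mem_range.1 hi
  exact mul_le_mul_of_nonneg_left (pow_le_pow_right₀ hy (by omega)) (norm_nonneg _)

section VPlus

variable {E : Type*} [Norm E] {R : ℝ} {w : E × E}

def vPlus (R : ℝ) : Set (E × E) := {w | ‖w.1‖ ≤ ‖w.2‖ ∧ R ≤ ‖w.2‖}

theorem max_norm_one_eq_norm_snd (hw : w ∈ vPlus R) (hR : 1 ≤ R) : max ‖w‖ 1 = ‖w.2‖ := by
  rw [Prod.norm_def, max_eq_right hw.1, max_eq_left (hR.trans hw.2)]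

theorem norm_snd_lt_norm_fst_of_notMem_vPlus (hw : w ∉ vPlus R) (hR : R < ‖w‖) :
    ‖w.2‖ < ‖w.1‖ := by
  by_contra! h
  rw [Prod.norm_def, max_eq_right h] at hR
  exact hw ⟨h, hR.le⟩

theorem exists_iterate_mem_vPlus {f : E × E → E × E} (hf : ∀ w, (f w).1 = w.2) {z : E × E}
    (hz : Tendsto (fun n => ‖f^[n] z‖) atTop atTop) (R : ℝ) : ∃ n, f^[n] z ∈ vPlus R := by
  by_contra! hout
  obtain ⟨N, hN⟩ := eventually_atTop.1 (hz.eventually_gt_atTop R)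
  have hfst : ∀ n ≥ N, ‖f^[n] z‖ = ‖(f^[n] z).1‖ ∧ ‖(f^[n] z).2‖ < ‖(f^[n] z).1‖ := fun n hn =>
    have h := norm_snd_lt_norm_fst_of_notMem_vPlus (hout n) (hN n hn)
    ⟨by rw [Prod.norm_def, max_eq_left h.le], h⟩
  have hanti : ∀ n ≥ N, ‖f^[n + 1] z‖ ≤ ‖f^[n] z‖ := fun n hn => by
    rw [(hfst (n + 1) (by omega)).1, Function.iterate_succ_apply', hf, (hfst n hn).1]
    exact (hfst n hn).2.le
  have hbdd : ∀ n ≥ N, ‖f^[n] z‖ ≤ ‖f^[N] z‖ := fun n hn => by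
    induction n, hn using Nat.le_induction with
    | base => rfl
    | succ n hn ih => exact (hanti n hn).trans ih
  obtain ⟨n, hbig, hn⟩ := ((hz.eventually_gt_atTop ‖f^[N] z‖).and (eventually_ge_atTop N)).exists
  exact (hbdd n hn).not_gt hbig

end VPlus

theorem isPathConnected_vPlus_inter {R ρ : ℝ} (hR : 0 < R) (hRρ : R ≤ ρ) :
    IsPathConnected (vPlus R ∩ {w : ℂ × ℂ | ‖w.2‖ ≤ ρ}) := by
  have hparam : vPlus R ∩ {w : ℂ × ℂ | ‖w.2‖ ≤ ρ} =
      (fun q : ℝ × ℝ × ℂ => (q.2.2 * (q.1 * Complex.exp (q.2.1 * Complex.I)),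
        (q.1 : ℂ) * Complex.exp (q.2.1 * Complex.I))) ''
        (Icc R ρ ×ˢ univ ×ˢ Metric.closedBall 0 1) := by
    ext ⟨x, y⟩
    constructor
    · rintro ⟨⟨hxy, hRy⟩, hyρ⟩
      have hy : 0 < ‖y‖ := hR.trans_le hRy
      refine ⟨(‖y‖, Complex.arg y, x / y), ⟨⟨hRy, hyρ⟩, trivial, ?_⟩, ?_⟩
      · rw [mem_closedBall_zero_iff, norm_div, div_le_one hy]
        exact hxy
      · simp only [Complex.norm_mul_exp_arg_mul_I, div_mul_cancel₀ x (norm_pos_iff.1 hy)]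
    · rintro ⟨⟨r, θ, s⟩, ⟨⟨hRr, hrρ⟩, -, hs⟩, hq⟩
      obtain ⟨rfl, rfl⟩ := Prod.ext_iff.1 hq
      rw [mem_closedBall_zero_iff] at hs
      have hr : ‖(r : ℂ) * Complex.exp (θ * Complex.I)‖ = r := by
        rw [norm_mul, Complex.norm_exp_ofReal_mul_I, mul_one, Complex.norm_real, Real.norm_eq_abs,
          abs_of_pos (hR.trans_le hRr)]
      refine ⟨⟨?_, ?_⟩, ?_⟩ <;> simp only [mem_ofPred_eq, norm_mul (s : ℂ), hr]
      · exact mul_le_of_le_one_left (hR.trans_le hRr).le hs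
      · exact hRr
      · exact hrρ
  rw [hparam]
  refine (Convex.isPathConnected ?_ ?_).image (by fun_prop)
  · exact (convex_Icc R ρ).prod (convex_univ.prod (convex_closedBall 0 1))
  · exact ⟨(R, 0, 0), ⟨left_mem_Icc.2 hRρ, trivial, by simp⟩⟩

section Henon

variable {𝕜 : Type*} [NormedField 𝕜] {p : 𝕜[X]} {a : 𝕜} {w : 𝕜 × 𝕜}

def henonMap (p : 𝕜[X]) (a : 𝕜) (z : 𝕜 × 𝕜) : 𝕜 × 𝕜 := (z.2, p.eval z.2 - a * z.1)

def henonMapInv (p : 𝕜[X]) (a : 𝕜) (z : 𝕜 × 𝕜) : 𝕜 × 𝕜 := ((p.eval z.1 - z.2) / a, z.1)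

theorem henonMapInv_henonMap (ha : a ≠ 0) :
    Function.LeftInverse (henonMapInv p a) (henonMap p a) :=
  fun z => by simp [henonMap, henonMapInv, ha]

theorem henonMap_henonMapInv (ha : a ≠ 0) :
    Function.LeftInverse (henonMap p a) (henonMapInv p a) :=
  fun z => by simp [henonMap, henonMapInv, ha, mul_div_cancel₀]

theorem continuous_henonMapInv : Continuous (henonMapInv p a) :=
  (((p.continuous.comp continuous_fst).sub continuous_snd).div_const a).prodMk continuous_fst

theorem isPathConnected_iterate_henonMap_preimage (ha : a ≠ 0) {W : Set (𝕜 × 𝕜)}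
    (hW : IsPathConnected W) (n : ℕ) : IsPathConnected ((henonMap p a)^[n] ⁻¹' W) := by
  rw [← image_eq_preimage_of_inverse ((henonMap_henonMapInv ha).iterate n)
    ((henonMapInv_henonMap ha).iterate n)]
  exact hW.image (continuous_henonMapInv.iterate n)

/-- `R ≥ 2 (‖a‖ + ∑ ‖aᵢ‖)` makes `H` act on `V⁺` like `y ↦ y ^ d` up to a factor in `[1/2, 3/2]`,
and `R ≥ e²` makes `G ≥ log R - 1 > 0` on `V⁺`. -/
def escapeRadius (p : 𝕜[X]) (a : 𝕜) : ℝ :=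
  max (2 * (‖a‖ + ∑ i ∈ Finset.range p.natDegree, ‖p.coeff i‖)) (Real.exp 2)

theorem exp_two_le_norm_snd (hw : w ∈ vPlus (escapeRadius p a)) : Real.exp 2 ≤ ‖w.2‖ :=
  (le_max_right _ _).trans hw.2

theorem abs_norm_henonMap_snd_sub_le (hp : p.Monic) (hd : 2 ≤ p.natDegree)
    (hw : w ∈ vPlus (escapeRadius p a)) :
    |‖(henonMap p a w).2‖ - ‖w.2‖ ^ p.natDegree| ≤ ‖w.2‖ ^ p.natDegree / 2 := by
  set d := p.natDegree
  set C := ‖a‖ + ∑ i ∈ Finset.range d, ‖p.coeff i‖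
  have hy1 : 1 ≤ ‖w.2‖ := (Real.one_le_exp zero_le_two).trans (exp_two_le_norm_snd hw)
  have hC : 2 * C ≤ ‖w.2‖ := (le_max_left _ _).trans hw.2
  have hax : ‖a * w.1‖ ≤ ‖a‖ * ‖w.2‖ ^ (d - 1) := by
    rw [norm_mul]
    exact mul_le_mul_of_nonneg_left (hw.1.trans (le_self_pow₀ hy1 (by omega))) (norm_nonneg a)
  have hyd : ‖w.2‖ ^ d = ‖w.2‖ * ‖w.2‖ ^ (d - 1) := by
    rw [← pow_succ']
    congr 1
    omega
  calc |‖(henonMap p a w).2‖ - ‖w.2‖ ^ d|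
      ≤ ‖(p.eval w.2 - w.2 ^ d) - a * w.1‖ := by
        rw [← norm_pow, sub_right_comm]
        exact abs_norm_sub_norm_le _ _
    _ ≤ ‖p.eval w.2 - w.2 ^ d‖ + ‖a * w.1‖ := norm_sub_le _ _
    _ ≤ C * ‖w.2‖ ^ (d - 1) := by
        linarith [norm_eval_sub_pow_natDegree_le hp hy1]
    _ ≤ ‖w.2‖ ^ d / 2 := by
        rw [hyd]
        nlinarith [pow_nonneg (norm_nonneg w.2) (d - 1)]

theorem mapsTo_henonMap_vPlus (hp : p.Monic) (hd : 2 ≤ p.natDegree) :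
    MapsTo (henonMap p a) (vPlus (escapeRadius p a)) (vPlus (escapeRadius p a)) := fun w hw => by
  have hstep := (abs_le.1 (abs_norm_henonMap_snd_sub_le hp hd hw)).1
  have hy2 : 2 ≤ ‖w.2‖ := by linarith [Real.add_one_le_exp 2, exp_two_le_norm_snd hw]
  have hpow : ‖w.2‖ ^ 2 ≤ ‖w.2‖ ^ p.natDegree := pow_le_pow_right₀ (by linarith) hd
  have hy : ‖w.2‖ ≤ ‖(henonMap p a w).2‖ := by nlinarith
  exact ⟨hy, hw.2.trans hy⟩

theorem abs_log_norm_henonMap_snd_sub_le (hp : p.Monic) (hd : 2 ≤ p.natDegree)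
    (hw : w ∈ vPlus (escapeRadius p a)) :
    |Real.log ‖(henonMap p a w).2‖ - p.natDegree * Real.log ‖w.2‖| ≤ 1 := by
  have hy : 0 < ‖w.2‖ := (Real.exp_pos 2).trans_le (exp_two_le_norm_snd hw)
  rw [← Real.log_pow]
  exact abs_log_sub_log_le_one (by positivity) (abs_norm_henonMap_snd_sub_le hp hd hw)

def IsGreenFunction (p : 𝕜[X]) (a : 𝕜) (G : 𝕜 × 𝕜 → ℝ) : Prop :=
  ∀ z, Tendsto (fun n : ℕ => Real.log (max ‖(henonMap p a)^[n] z‖ 1) / (p.natDegree : ℝ) ^ n)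
    atTop (𝓝 (G z))

variable {G : 𝕜 × 𝕜 → ℝ}

theorem green_iterate_henonMap (hd : p.natDegree ≠ 0)
    (hGreen : IsGreenFunction p a G) (n : ℕ) (z : 𝕜 × 𝕜) :
    G ((henonMap p a)^[n] z) = p.natDegree ^ n * G z :=
  apply_iterate_eq_pow_mul_of_tendsto (u := fun w => Real.log (max ‖w‖ 1)) (by exact_mod_cast hd)
    hGreen n z

theorem abs_green_sub_log_norm_snd_le (hp : p.Monic) (hd : 2 ≤ p.natDegree)
    (hGreen : IsGreenFunction p a G) (hw : w ∈ vPlus (escapeRadius p a)) :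
    |G w - Real.log ‖w.2‖| ≤ 1 := by
  have horbit := (mapsTo_henonMap_vPlus (a := a) hp hd).iterate
  have hR : 1 ≤ escapeRadius p a := (Real.one_le_exp zero_le_two).trans (le_max_right _ _)
  refine abs_sub_le_one_of_tendsto_div_pow (d := p.natDegree)
    (L := fun n => Real.log ‖((henonMap p a)^[n] w).2‖) (by exact_mod_cast hd)
    (fun n => ?_) ((hGreen w).congr fun n => ?_)
  · rw [Function.iterate_succ_apply']
    exact abs_log_norm_henonMap_snd_sub_le hp hd (horbit n hw)
  · rw [max_norm_one_eq_norm_snd (horbit n hw) hR]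

theorem eventually_iterate_henonMap_mem_vPlus [ProperSpace 𝕜] (hp : p.Monic)
    (hd : 2 ≤ p.natDegree) (hGreen : IsGreenFunction p a G) (hGc : Continuous G)
    {z : 𝕜 × 𝕜} (hz : 0 < G z) :
    ∀ᶠ n in atTop, (henonMap p a)^[n] z ∈ vPlus (escapeRadius p a) := by
  have hesc : Tendsto (fun n => ‖(henonMap p a)^[n] z‖) atTop atTop := by
    refine tendsto_norm_cocompact_atTop.comp (tendsto_cocompact_of_tendsto_comp_atTop hGc ?_)
    simp only [Function.comp_def, green_iterate_henonMap (by omega) hGreen]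
    exact (tendsto_pow_atTop_atTop_of_one_lt (by exact_mod_cast hd)).atTop_mul_const hz
  obtain ⟨n, hn⟩ := exists_iterate_mem_vPlus (fun _ => rfl) hesc (escapeRadius p a)
  filter_upwards [eventually_ge_atTop n] with k hk
  rw [← Nat.sub_add_cancel hk, Function.iterate_add_apply]
  exact (mapsTo_henonMap_vPlus hp hd).iterate _ hn

theorem eventually_iterate_henonMap_mem_vPlus_inter [ProperSpace 𝕜] (hp : p.Monic)
    (hd : 2 ≤ p.natDegree) (hGreen : IsGreenFunction p a G) (hGc : Continuous G) {c : ℝ} {z : 𝕜 × 𝕜}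
    (hz : 0 < G z) (hzc : G z < c) :
    ∀ᶠ n in atTop, (henonMap p a)^[n] z ∈
      vPlus (escapeRadius p a) ∩ {w | ‖w.2‖ ≤ Real.exp (c * p.natDegree ^ n - 2)} := by
  have hgap : Tendsto (fun n : ℕ => (p.natDegree : ℝ) ^ n * (c - G z)) atTop atTop :=
    (tendsto_pow_atTop_atTop_of_one_lt (by exact_mod_cast hd)).atTop_mul_const (sub_pos.2 hzc)
  filter_upwards [eventually_iterate_henonMap_mem_vPlus hp hd hGreen hGc hz,
    hgap.eventually_ge_atTop 3] with n hV hn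
  refine ⟨hV, (Real.log_le_iff_le_exp ((Real.exp_pos 2).trans_le (exp_two_le_norm_snd hV))).1 ?_⟩
  have hlog := (abs_le.1 (abs_green_sub_log_norm_snd_le hp hd hGreen hV)).1
  rw [green_iterate_henonMap (by omega) hGreen] at hlog
  linarith [mul_sub ((p.natDegree : ℝ) ^ n) c (G z)]

theorem iterate_henonMap_preimage_vPlus_inter_subset (hp : p.Monic) (hd : 2 ≤ p.natDegree)
    (hGreen : IsGreenFunction p a G) (c : ℝ) (n : ℕ) :
    (henonMap p a)^[n] ⁻¹' (vPlus (escapeRadius p a) ∩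
      {w | ‖w.2‖ ≤ Real.exp (c * p.natDegree ^ n - 2)}) ⊆ {z | 0 < G z ∧ G z < c} := by
  rintro z ⟨hV, hρ⟩
  have hy := exp_two_le_norm_snd hV
  have hy0 : 0 < ‖((henonMap p a)^[n] z).2‖ := (Real.exp_pos 2).trans_le hy
  have hlo : 2 ≤ Real.log ‖((henonMap p a)^[n] z).2‖ := (Real.le_log_iff_exp_le hy0).2 hy
  have hhi := (Real.log_le_iff_le_exp hy0).2 hρ
  have hlog := abs_le.1 (abs_green_sub_log_norm_snd_le hp hd hGreen hV)
  rw [green_iterate_henonMap (by omega) hGreen] at hlog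
  have hdn : (0 : ℝ) < p.natDegree ^ n := by positivity
  exact ⟨pos_of_mul_pos_right (by linarith) hdn.le,
    lt_of_mul_lt_mul_left (by linarith) hdn.le⟩

end Henon

theorem stmt_2_general (d : ℕ) (hd : 2 ≤ d) (a : ℂ) (ha : a ≠ 0)
    (p : Polynomial ℂ) (hpm : p.Monic) (hpd : p.natDegree = d)
    (H : ℂ × ℂ → ℂ × ℂ) (hH : ∀ z : ℂ × ℂ, H z = (z.2, p.eval z.2 - a * z.1))
    (G : ℂ × ℂ → ℝ) (hGcont : Continuous G)
    (hGlim : ∀ z : ℂ × ℂ,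
      Tendsto (fun n : ℕ => Real.log (max ‖H^[n] z‖ 1) / (d : ℝ) ^ n) atTop (𝓝 (G z)))
    (c : ℝ) (hc : 0 < c) :
    IsPathConnected {z : ℂ × ℂ | 0 < G z ∧ G z < c} := by
  subst hpd
  obtain rfl : H = henonMap p a := funext hH
  refine isPathConnected_of_eventually_mem ?_
    (iterate_henonMap_preimage_vPlus_inter_subset hpm hd hGlim c)
    fun z hz => eventually_iterate_henonMap_mem_vPlus_inter hpm hd hGlim hGcont hz.1 hz.2
  have hR : 0 < escapeRadius p a := (Real.exp_pos 2).trans_le (le_max_right _ _)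
  have hρ : Tendsto (fun n : ℕ => c * (p.natDegree : ℝ) ^ n - 2) atTop atTop :=
    tendsto_atTop_add_const_right _ _
      ((tendsto_pow_atTop_atTop_of_one_lt (by exact_mod_cast hd)).const_mul_atTop hc)
  filter_upwards [hρ.eventually_ge_atTop (Real.log (escapeRadius p a))] with n hn
  exact isPathConnected_iterate_henonMap_preimage ha
    (isPathConnected_vPlus_inter hR ((Real.log_le_iff_le_exp hR).1 hn)) n

/-- For every `c > 0`, the punctured Short ℂ²,
`Ω'_c = {z ∈ ℂ² : 0 < G⁺_H(z) < c}`, is path-connected. -/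
theorem stmt_2 (d : ℕ) (hd : 2 ≤ d) (a : ℂ) (ha : a ≠ 0)
    (p : Polynomial ℂ) (hpm : p.Monic) (hpd : p.natDegree = d)
    (hpc : p.coeff (d - 1) = 0)
    (H : ℂ × ℂ → ℂ × ℂ) (hH : ∀ z : ℂ × ℂ, H z = (z.2, p.eval z.2 - a * z.1))
    (G : ℂ × ℂ → ℝ) (hGcont : Continuous G) (hGnonneg : ∀ z, 0 ≤ G z)
    (hGlim : ∀ z : ℂ × ℂ,
      Tendsto (fun n : ℕ => Real.log (max ‖H^[n] z‖ 1) / (d : ℝ) ^ n) atTop (𝓝 (G z)))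
    (c : ℝ) (hc : 0 < c) :
    IsPathConnected {z : ℂ × ℂ | 0 < G z ∧ G z < c} :=
  stmt_2_general d hd a ha p hpm hpd H hH G hGcont hGlim c hc
end
end
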